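/- For every ♠ ∈ {⊕, &} and all closed session types T and U: T ≤_♠ U if and only if U ⊨ F(T, ♠). -/
import Mathlib


namespace SessionCF

/-- Polarity of an action: `send` is `!`, `recv` is `?`.  Also used for the
choice constructors: `send` is the internal choice `⊕`, `recv` the external
choice `&`. -/
inductive Pol : Type
  | send
  | recv
  deriving DecidableEq, Repr

/-- The dual polarity / constructor. -/
def Pol.dual : Pol → Pol
  | .send => .recv
  | .recv => .send

/-- Actions `!a` and `?a` over the alphabet `A`. -/
abbrev Act (A : Type) := Pol × A

/-- Session types (de Bruijn representation of recursion variables).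
An internal choice `⊕_{i∈I} !a_i.T_i` is `choice .send I br`; an external
choice `&_{i∈I} ?a_i.T_i` is `choice .recv I br`, where `br a` is the
continuation after message `a` (only relevant for `a ∈ I`). -/
inductive SType (A : Type) : Type
  | end_ : SType A
  | choice : Pol → Finset A → (A → SType A) → SType A
  | mu : SType A → SType A
  | var : ℕ → SType A

namespace SType

variable {A : Type}

/-- Lifting of a renaming under a binder. -/
def liftR (f : ℕ → ℕ) : ℕ → ℕ
  | 0 => 0
  | n + 1 => f n + 1

/-- Renaming of free type variables. -/
def rename : SType A → (ℕ → ℕ) → SType A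
  | .end_, _ => .end_
  | .choice p d br, f => .choice p d (fun a => (br a).rename f)
  | .mu T, f => .mu (T.rename (liftR f))
  | .var n, f => .var (f n)

/-- Lifting of a (parallel, capture-avoiding) substitution under a binder. -/
def liftS (σ : ℕ → SType A) : ℕ → SType A
  | 0 => .var 0
  | n + 1 => (σ n).rename Nat.succ

/-- Parallel capture-avoiding substitution. -/
def subst : SType A → (ℕ → SType A) → SType A
  | .end_, _ => .end_
  | .choice p d br, σ => .choice p d (fun a => (br a).subst σ)
  | .mu T, σ => .mu (T.subst (liftS σ))
  | .var n, σ => σ n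

/-- Capture-avoiding substitution `T[U/x]` of `U` for the free variable `x`. -/
def substVar (T : SType A) (x : ℕ) (U : SType A) : SType A :=
  T.subst (fun n => if n = x then U else .var n)

/-- `cons` of a type onto a substitution. -/
def consS (U : SType A) (σ : ℕ → SType A) : ℕ → SType A
  | 0 => U
  | n + 1 => σ n

/-- The unfolding `T[rec x.T / x]` of the body of `rec x.T`. -/
def unfold (T : SType A) : SType A :=
  T.subst (consS (.mu T) .var)

/-- All free variables are `< k`. -/
def closedUnder : SType A → ℕ → Prop
  | .end_, _ => True
  | .choice _ d br, k => ∀ a ∈ d, (br a).closedUnder k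
  | .mu T, k => T.closedUnder (k + 1)
  | .var n, k => n < k

/-- A closed session type (no free variables). -/
def closed (T : SType A) : Prop := T.closedUnder 0

/-- Variable `x` only occurs guarded (under a choice prefix). -/
def guardedVar : SType A → ℕ → Prop
  | .end_, _ => True
  | .choice _ _ _, _ => True
  | .mu T, x => T.guardedVar (x + 1)
  | .var m, x => m ≠ x

/-- Well-formed session types: contractive (every recursion variable is
guarded) and every choice has a nonempty, finite index set. -/
def wf : SType A → Prop
  | .end_ => True
  | .choice _ d br => d.Nonempty ∧ ∀ a ∈ d, (br a).wf
  | .mu T => T.wf ∧ T.guardedVar 0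
  | .var _ => True

/-- The dual session type: swaps `⊕` with `&` and `!` with `?`. -/
def dual : SType A → SType A
  | .end_ => .end_
  | .choice p d br => .choice p.dual d (fun a => (br a).dual)
  | .mu T => .mu T.dual
  | .var n => .var n

end SType

/-- The labelled transition system on session types. -/
inductive Step {A : Type} : SType A → Act A → SType A → Prop
  | choice {p : Pol} {d : Finset A} {br : A → SType A} {a : A} (h : a ∈ d) :
      Step (.choice p d br) (p, a) (br a)
  | unf {T : SType A} {α : Act A} {T' : SType A} :
      Step T.unfold α T' → Step (.mu T) α T'

/-- Modal μ-calculus formulae (greatest-fixpoint fragment), de Bruijn. -/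
inductive Formula (A : Type) : Type
  | tt : Formula A
  | ff : Formula A
  | and : Formula A → Formula A → Formula A
  | or : Formula A → Formula A → Formula A
  | box : Act A → Formula A → Formula A
  | dia : Act A → Formula A → Formula A
  | nu : Formula A → Formula A
  | var : ℕ → Formula A

namespace Formula

variable {A : Type}

/-- Renaming of free formula variables. -/
def rename : Formula A → (ℕ → ℕ) → Formula A
  | .tt, _ => .tt
  | .ff, _ => .ff
  | .and φ ψ, f => .and (φ.rename f) (ψ.rename f)
  | .or φ ψ, f => .or (φ.rename f) (ψ.rename f)
  | .box α φ, f => .box α (φ.rename f)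
  | .dia α φ, f => .dia α (φ.rename f)
  | .nu φ, f => .nu (φ.rename (SType.liftR f))
  | .var n, f => .var (f n)

/-- Lifting of a substitution under a `ν` binder. -/
def liftF (τ : ℕ → Formula A) : ℕ → Formula A
  | 0 => .var 0
  | n + 1 => (τ n).rename Nat.succ

/-- Parallel capture-avoiding substitution on formulae. -/
def subst : Formula A → (ℕ → Formula A) → Formula A
  | .tt, _ => .tt
  | .ff, _ => .ff
  | .and φ ψ, τ => .and (φ.subst τ) (ψ.subst τ)
  | .or φ ψ, τ => .or (φ.subst τ) (ψ.subst τ)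
  | .box α φ, τ => .box α (φ.subst τ)
  | .dia α φ, τ => .dia α (φ.subst τ)
  | .nu φ, τ => .nu (φ.subst (liftF τ))
  | .var n, τ => τ n

/-- Capture-avoiding substitution `φ[ψ/x]` for the free variable `x`. -/
def substVar (φ : Formula A) (x : ℕ) (ψ : Formula A) : Formula A :=
  φ.subst (fun n => if n = x then ψ else .var n)

/-- `cons` of a formula onto a substitution. -/
def consF (ψ : Formula A) (τ : ℕ → Formula A) : ℕ → Formula A
  | 0 => ψ
  | n + 1 => τ n

/-- Instantiation `φ[ψ/x]` of the variable bound by the enclosing binder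
(de Bruijn index `0`). -/
def inst (φ ψ : Formula A) : Formula A :=
  φ.subst (consF ψ .var)

/-- The `n`-th approximation `(νx.φ)ⁿ` of the fixpoint `νx.φ`, where `φ` is
the body:  `(νx.φ)⁰ = true` and `(νx.φ)ⁿ⁺¹ = φ[(νx.φ)ⁿ/x]`. -/
def nuApprox (φ : Formula A) : ℕ → Formula A
  | 0 => .tt
  | n + 1 => φ.inst (φ.nuApprox n)

/-- All free formula variables are `< k`. -/
def closedUnder : Formula A → ℕ → Prop
  | .tt, _ => True
  | .ff, _ => True
  | .and φ ψ, k => φ.closedUnder k ∧ ψ.closedUnder k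
  | .or φ ψ, k => φ.closedUnder k ∧ ψ.closedUnder k
  | .box _ φ, k => φ.closedUnder k
  | .dia _ φ, k => φ.closedUnder k
  | .nu φ, k => φ.closedUnder (k + 1)
  | .var n, k => n < k

/-- A closed formula. -/
def closed (φ : Formula A) : Prop := φ.closedUnder 0

/-- Variable `x` only occurs guarded (under a modality). -/
def guardedVar : Formula A → ℕ → Prop
  | .tt, _ => True
  | .ff, _ => True
  | .and φ ψ, x => φ.guardedVar x ∧ ψ.guardedVar x
  | .or φ ψ, x => φ.guardedVar x ∧ ψ.guardedVar x
  | .box _ _, _ => True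
  | .dia _ _, _ => True
  | .nu φ, x => φ.guardedVar (x + 1)
  | .var m, x => m ≠ x

/-- Contractive (well-formed) formulae. -/
def wf : Formula A → Prop
  | .tt => True
  | .ff => True
  | .and φ ψ => φ.wf ∧ ψ.wf
  | .or φ ψ => φ.wf ∧ ψ.wf
  | .box _ φ => φ.wf
  | .dia _ φ => φ.wf
  | .nu φ => φ.wf ∧ φ.guardedVar 0
  | .var _ => True

/-- The dual formula: swaps `!` and `?` in all modalities. -/
def dual : Formula A → Formula A
  | .tt => .tt
  | .ff => .ff
  | .and φ ψ => .and φ.dual ψ.dual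
  | .or φ ψ => .or φ.dual ψ.dual
  | .box (p, a) φ => .box (p.dual, a) φ.dual
  | .dia (p, a) φ => .dia (p.dual, a) φ.dual
  | .nu φ => .nu φ.dual
  | .var n => .var n

end Formula

/-- The satisfaction relation `T ⊨ φ` between session types and formulae,
defined inductively; `T ⊨ νx.φ` iff `T ⊨ (νx.φ)ⁿ` for all `n`. -/
inductive Sat {A : Type} : SType A → Formula A → Prop
  | tt {T : SType A} : Sat T .tt
  | and {T : SType A} {φ ψ : Formula A} : Sat T φ → Sat T ψ → Sat T (.and φ ψ)
  | orl {T : SType A} {φ ψ : Formula A} : Sat T φ → Sat T (.or φ ψ)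
  | orr {T : SType A} {φ ψ : Formula A} : Sat T ψ → Sat T (.or φ ψ)
  | box {T : SType A} {α : Act A} {φ : Formula A} :
      (∀ T', Step T α T' → Sat T' φ) → Sat T (.box α φ)
  | dia {T T' : SType A} {α : Act A} {φ : Formula A} :
      Step T α T' → Sat T' φ → Sat T (.dia α φ)
  | nu {T : SType A} {φ : Formula A} :
      (∀ n, Sat T (φ.nuApprox n)) → Sat T (.nu φ)

/-- One step of the subtyping rules (for parameter `s ∈ {⊕, &}`), including
the equi-recursive identifications of `rec x.T` with its unfolding. -/
def SubStep {A : Type} (s : Pol) (R : SType A → SType A → Prop)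
    (T U : SType A) : Prop :=
  (T = .end_ ∧ U = .end_)
  ∨ (∃ (dT : Finset A) (brT : A → SType A) (dU : Finset A) (brU : A → SType A),
      T = .choice s dT brT ∧ U = .choice s dU brU ∧ dT ⊆ dU ∧
        ∀ a ∈ dT, R (brT a) (brU a))
  ∨ (∃ (dT : Finset A) (brT : A → SType A) (dU : Finset A) (brU : A → SType A),
      T = .choice s.dual dT brT ∧ U = .choice s.dual dU brU ∧ dU ⊆ dT ∧
        ∀ a ∈ dU, R (brT a) (brU a))
  ∨ (∃ T₀, T = .mu T₀ ∧ R T₀.unfold U)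
  ∨ (∃ U₀, U = .mu U₀ ∧ R T U₀.unfold)

/-- The subtyping relation `≤_s`: the largest relation closed under the
(coinductively interpreted, equi-recursive) subtyping rules. -/
def Subtype {A : Type} (s : Pol) (T U : SType A) : Prop :=
  ∃ R : SType A → SType A → Prop,
    (∀ T U, R T U → SubStep s R T U) ∧ R T U

section CharFormula

variable {A : Type} [Fintype A] [LinearOrder A]

/-- Big conjunction of a list of formulae. -/
def bigAnd : List (Formula A) → Formula A
  | [] => .tt
  | φ :: rest => .and φ (bigAnd rest)

/-- Big disjunction of a list of formulae. -/
def bigOr : List (Formula A) → Formula A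
  | [] => .ff
  | φ :: rest => .or φ (bigOr rest)

/-- The (canonically ordered) list of all actions `𝒜 = {!a, ?a : a ∈ 𝔸}`. -/
def allActs (A : Type) [Fintype A] [LinearOrder A] : List (Act A) :=
  ((Finset.univ : Finset A).sort (· ≤ ·)).map (fun a => (Pol.send, a)) ++
    ((Finset.univ : Finset A).sort (· ≤ ·)).map (fun a => (Pol.recv, a))

/-- The characteristic formula `F(T, s)` of a session type `T` on the
constructor `s ∈ {⊕, &}`. -/
def charF : SType A → Pol → Formula A
  | .end_, _ => bigAnd ((allActs A).map (fun α => .box α .ff))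
  | .var n, _ => .var n
  | .mu T, s => .nu (charF T s)
  | .choice p d br, s =>
      if p = s then
        bigAnd ((d.sort (· ≤ ·)).map (fun a => .dia (p, a) (charF (br a) s)))
      else
        .and
          (bigAnd ((d.sort (· ≤ ·)).map (fun a => .box (p, a) (charF (br a) s))))
          (.and
            (bigOr ((d.sort (· ≤ ·)).map (fun a => Formula.dia (p, a) .tt)))
            (bigAnd (((allActs A).filter
                (fun α => ¬ (α.1 = p ∧ α.2 ∈ d))).map (fun α => .box α .ff))))

end CharFormula

/-- Synchronous semantics of a system of two session types. -/
inductive SysStep {A : Type} : SType A × SType A → SType A × SType A → Prop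
  | comm {T T' U U' : SType A} {p : Pol} {a : A} :
      Step T (p, a) T' → Step U (p.dual, a) U' → SysStep (T, U) (T', U')

/-- `T` is a choice with constructor `p`. -/
def isChoice {A : Type} (p : Pol) (T : SType A) : Prop :=
  ∃ (d : Finset A) (br : A → SType A), T = SType.choice p d br

/-- Error systems. -/
def Error {A : Type} (T U : SType A) : Prop :=
  (∃ p, isChoice p T ∧ isChoice p U)
  ∨ (∃ (dT : Finset A) (brT : A → SType A) (dU : Finset A) (brU : A → SType A),
      T = .choice .send dT brT ∧ U = .choice .recv dU brU ∧ ∃ a ∈ dT, a ∉ dU)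
  ∨ (∃ (dT : Finset A) (brT : A → SType A) (dU : Finset A) (brU : A → SType A),
      U = .choice .send dU brU ∧ T = .choice .recv dT brT ∧ ∃ a ∈ dU, a ∉ dT)
  ∨ (T = .end_ ∧ ∃ p, isChoice p U)
  ∨ (U = .end_ ∧ ∃ p, isChoice p T)

/-- A system is safe if no reachable system is an error. -/
def Safe {A : Type} (T U : SType A) : Prop :=
  ∀ S' : SType A × SType A,
    Relation.ReflTransGen SysStep (T, U) S' → ¬ Error S'.1 S'.2

/-- A substitution is closed when all its components are closed types. -/
def closedSubst {A : Type} (σ : ℕ → SType A) : Prop :=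
  ∀ n, (σ n).closed

/-- Extended subtyping: all closed instantiations of the free variables are
related by `≤_s`. -/
def ExtSub {A : Type} (s : Pol) (T U : SType A) : Prop :=
  ∀ σ : ℕ → SType A, closedSubst σ → Subtype s (T.subst σ) (U.subst σ)

/-- The `k`-limited subtyping derivations on closed types (equi-recursive:
recursion may be unfolded freely at the same level; premises are at level
`k - 1`; everything holds at level `0`). -/
inductive SubK {A : Type} (s : Pol) : ℕ → SType A → SType A → Prop
  | zero {T U : SType A} : SubK s 0 T U
  | end_ {k : ℕ} : SubK s (k + 1) .end_ .end_
  | ch {k : ℕ} {dT : Finset A} {brT : A → SType A} {dU : Finset A}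
      {brU : A → SType A} :
      dT ⊆ dU → (∀ a ∈ dT, SubK s k (brT a) (brU a)) →
      SubK s (k + 1) (.choice s dT brT) (.choice s dU brU)
  | coch {k : ℕ} {dT : Finset A} {brT : A → SType A} {dU : Finset A}
      {brU : A → SType A} :
      dU ⊆ dT → (∀ a ∈ dU, SubK s k (brT a) (brU a)) →
      SubK s (k + 1) (.choice s.dual dT brT) (.choice s.dual dU brU)
  | recL {k : ℕ} {T U : SType A} :
      SubK s (k + 1) T.unfold U → SubK s (k + 1) (.mu T) U
  | recR {k : ℕ} {T U : SType A} :
      SubK s (k + 1) T U.unfold → SubK s (k + 1) T (.mu U)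

/-- The extended `k`-limited subtyping `≤_{s,e,k}`. -/
def ExtSubK {A : Type} (s : Pol) (k : ℕ) (T U : SType A) : Prop :=
  ∀ σ : ℕ → SType A, closedSubst σ → SubK s k (T.subst σ) (U.subst σ)

/-- Extended satisfaction `T ⊨_e φ`: every closed instantiation of the type
by types `V_i` and of the formula by closed formulae `ψ_i` with `V_i ⊨ ψ_i`
(at the same variable) satisfies the instantiated formula. -/
def SatE {A : Type} (T : SType A) (φ : Formula A) : Prop :=
  ∀ (σ : ℕ → SType A) (τ : ℕ → Formula A),
    closedSubst σ → (∀ n, (τ n).closed) → (∀ n, Sat (σ n) (τ n)) →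
    Sat (T.subst σ) (φ.subst τ)

/-- The `k`-limited extended satisfaction relation `⊨_{e,k}`. -/
inductive SatK {A : Type} : ℕ → SType A → Formula A → Prop
  | zero {T : SType A} {φ : Formula A} : SatK 0 T φ
  | tt {k : ℕ} {T : SType A} : SatK (k + 1) T .tt
  | and {k : ℕ} {T : SType A} {φ ψ : Formula A} :
      SatK (k + 1) T φ → SatK (k + 1) T ψ → SatK (k + 1) T (.and φ ψ)
  | orl {k : ℕ} {T : SType A} {φ ψ : Formula A} :
      SatK (k + 1) T φ → SatK (k + 1) T (.or φ ψ)
  | orr {k : ℕ} {T : SType A} {φ ψ : Formula A} :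
      SatK (k + 1) T ψ → SatK (k + 1) T (.or φ ψ)
  | box {k : ℕ} {T : SType A} {α : Act A} {φ : Formula A} :
      (∀ σ : ℕ → SType A, closedSubst σ →
        ∀ T', Step (T.subst σ) α T' → SatK k T' φ) →
      SatK (k + 1) T (.box α φ)
  | dia {k : ℕ} {T : SType A} {α : Act A} {φ : Formula A}
      (W : ∀ σ : ℕ → SType A, closedSubst σ → SType A) :
      (∀ (σ : ℕ → SType A) (h : closedSubst σ), Step (T.subst σ) α (W σ h)) →
      (∀ (σ : ℕ → SType A) (h : closedSubst σ), SatK k (W σ h) φ) →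
      SatK (k + 1) T (.dia α φ)
  | nu {k : ℕ} {T : SType A} {φ : Formula A} :
      (∀ n, SatK (k + 1) T (φ.nuApprox n)) → SatK (k + 1) T (.nu φ)

/-- Type constructors `ℭ`: `end`, `⊕A` and `&A`. -/
inductive Ctor (A : Type) : Type
  | end_ : Ctor A
  | choice : Pol → Finset A → Ctor A

/-- The labelling of the term automaton `𝒜(T)`: the constructor of (the
unfolding of) a session type. -/
inductive HasCtor {A : Type} : SType A → Ctor A → Prop
  | end_ : HasCtor .end_ .end_
  | choice {p : Pol} {d : Finset A} {br : A → SType A} :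
      HasCtor (.choice p d br) (.choice p d)
  | unf {T : SType A} {c : Ctor A} : HasCtor T.unfold c → HasCtor (.mu T) c

/-- The order `⊑` on type constructors. -/
def CtorLe {A : Type} : Ctor A → Ctor A → Prop
  | .end_, .end_ => True
  | .choice .send d₁, .choice .send d₂ => d₁ ⊆ d₂
  | .choice .recv d₁, .choice .recv d₂ => d₂ ⊆ d₁
  | _, _ => False

/-- Transitions of the product automaton `𝒜(T) × 𝒜(U)`: a common action. -/
def ProdStep {A : Type} (S S' : SType A × SType A) : Prop :=
  ∃ α : Act A, Step S.1 α S'.1 ∧ Step S.2 α S'.2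

end SessionCF


section AuxLemmas
namespace SessionCF

variable {A : Type}

theorem Pol.dual_ne (s : Pol) : s.dual ≠ s := by cases s <;> simp [Pol.dual]

theorem Pol.eq_or_eq_dual (p s : Pol) : p = s ∨ p = s.dual := by
  cases p <;> cases s <;> simp [Pol.dual]

namespace SType

theorem rename_rename (T : SType A) (f g : ℕ → ℕ) :
    (T.rename f).rename g = T.rename (fun n => g (f n)) := by
  induction T generalizing f g with
  | end_ => rfl
  | choice p d br ih => simp [rename]; funext a; exact ih a f g
  | mu T ih =>
      simp [rename, ih]
      congr 1
      funext n
      cases n <;> simp [liftR]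
  | var n => rfl

theorem rename_subst (T : SType A) (f : ℕ → ℕ) (σ : ℕ → SType A) :
    (T.rename f).subst σ = T.subst (fun n => σ (f n)) := by
  induction T generalizing f σ with
  | end_ => rfl
  | choice p d br ih => simp [rename, subst]; funext a; exact ih a f σ
  | mu T ih =>
      simp [rename, subst, ih]
      congr 1
      funext n
      cases n <;> simp [liftR, liftS]
  | var n => rfl

theorem subst_rename (T : SType A) (σ : ℕ → SType A) (f : ℕ → ℕ) :
    (T.subst σ).rename f = T.subst (fun n => (σ n).rename f) := by
  induction T generalizing f σ with
  | end_ => rfl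
  | choice p d br ih => simp [rename, subst]; funext a; exact ih a σ f
  | mu T ih =>
      simp [rename, subst, ih]
      congr 1
      funext n
      cases n with
      | zero => simp [liftR, liftS, rename]
      | succ n => simp [liftS, rename_rename, liftR]
  | var n => rfl

theorem subst_subst (T : SType A) (σ σ' : ℕ → SType A) :
    (T.subst σ).subst σ' = T.subst (fun n => (σ n).subst σ') := by
  induction T generalizing σ σ' with
  | end_ => rfl
  | choice p d br ih => simp [subst]; funext a; exact ih a σ σ'
  | mu T ih =>
      simp [subst, ih]
      congr 1
      funext n
      cases n with
      | zero => simp [liftS, subst]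
      | succ n => simp [liftS, rename_subst, subst_rename]
  | var n => rfl

theorem subst_id (T : SType A) : T.subst .var = T := by
  induction T with
  | end_ => rfl
  | choice p d br ih => simp [subst]; funext a; exact ih a
  | mu T ih =>
      simp [subst]
      have : liftS (A := A) .var = .var := by
        funext n; cases n <;> simp [liftS, rename]
      rw [this, ih]
  | var n => rfl

end SType
end SessionCF
end AuxLemmas


section AuxLemmas2
namespace SessionCF
variable {A : Type}
namespace SType

theorem rename_closedUnder {T : SType A} {k : ℕ} (h : T.closedUnder k)
    {f : ℕ → ℕ} {j : ℕ} (hf : ∀ n < k, f n < j) : (T.rename f).closedUnder j := by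
  induction T generalizing k f j with
  | end_ => trivial
  | choice p d br ih => exact fun a ha => ih a (h a ha) hf
  | mu T ih =>
      refine ih h ?_
      intro n hn
      cases n with
      | zero => simp [liftR]
      | succ n => simpa [liftR] using hf n (Nat.lt_of_succ_lt_succ hn)
  | var n => exact hf n h

theorem subst_closedUnder {T : SType A} {k : ℕ} (h : T.closedUnder k)
    {σ : ℕ → SType A} {j : ℕ} (hσ : ∀ n < k, (σ n).closedUnder j) :
    (T.subst σ).closedUnder j := by
  induction T generalizing k σ j with
  | end_ => trivial
  | choice p d br ih => exact fun a ha => ih a (h a ha) hσ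
  | mu T ih =>
      refine ih h ?_
      intro n hn
      cases n with
      | zero => simpa [liftS, closedUnder] using Nat.succ_pos j
      | succ n =>
          simp only [liftS]
          exact rename_closedUnder (hσ n (Nat.lt_of_succ_lt_succ hn))
            (fun m hm => Nat.succ_lt_succ hm)
  | var n => exact hσ n h

theorem guard_rename {T : SType A} {x : ℕ} (h : T.guardedVar x)
    {f : ℕ → ℕ} {y : ℕ} (hf : ∀ n, f n = y → n = x) : (T.rename f).guardedVar y := by
  induction T generalizing x f y with
  | end_ => trivial
  | choice p d br ih => trivial
  | mu T ih =>
      refine ih h ?_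
      intro n hn
      cases n with
      | zero => simp [liftR] at hn
      | succ n =>
          simp only [liftR] at hn
          have := hf n (Nat.succ_injective hn)
          simp [this]
  | var n => exact fun hy => h (hf n hy)

theorem guard_rename_all (T : SType A) {f : ℕ → ℕ} {x : ℕ}
    (hf : ∀ n, f n ≠ x) : (T.rename f).guardedVar x := by
  induction T generalizing f x with
  | end_ => trivial
  | choice p d br ih => trivial
  | mu T ih =>
      refine ih ?_
      intro n
      cases n with
      | zero => simp [liftR]
      | succ n => simp only [liftR]; exact fun hn => hf n (Nat.succ_injective hn)
  | var n => exact hf n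

theorem wf_rename {T : SType A} (h : T.wf) (f : ℕ → ℕ) : (T.rename f).wf := by
  induction T generalizing f with
  | end_ => trivial
  | choice p d br ih => exact ⟨h.1, fun a ha => ih a (h.2 a ha) f⟩
  | mu T ih =>
      refine ⟨ih h.1 _, ?_⟩
      refine guard_rename h.2 ?_
      intro n hn
      cases n with
      | zero => rfl
      | succ n => simp [liftR] at hn
  | var n => trivial

theorem guard_subst {T : SType A} {x' : ℕ} (h : T.guardedVar x')
    {σ : ℕ → SType A} {x : ℕ} (hσ : ∀ m, m ≠ x' → (σ m).guardedVar x) :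
    (T.subst σ).guardedVar x := by
  induction T generalizing x' σ x with
  | end_ => trivial
  | choice p d br ih => trivial
  | mu T ih =>
      refine ih h ?_
      intro m hm
      cases m with
      | zero => simpa [liftS, guardedVar] using Nat.succ_ne_zero x |>.symm
      | succ m =>
          simp only [liftS]
          refine guard_rename (hσ m (fun he => hm (by simp [he]))) ?_
          exact fun n hn => Nat.succ_injective hn
  | var n => exact hσ n h

theorem wf_subst {T : SType A} (h : T.wf) {σ : ℕ → SType A}
    (hσ : ∀ n, (σ n).wf) : (T.subst σ).wf := by
  induction T generalizing σ with
  | end_ => trivial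
  | choice p d br ih => exact ⟨h.1, fun a ha => ih a (h.2 a ha) hσ⟩
  | mu T ih =>
      refine ⟨ih h.1 ?_, ?_⟩
      · intro n
        cases n with
        | zero => trivial
        | succ n => exact wf_rename (hσ n) _
      · refine guard_subst h.2 ?_
        intro m hm
        cases m with
        | zero => exact absurd rfl hm
        | succ m =>
            simp only [liftS]
            exact guard_rename_all _ (fun n => Nat.succ_ne_zero n)
  | var n => exact hσ n

theorem closedUnder_guardedVar {T : SType A} {k : ℕ} (h : T.closedUnder k)
    {x : ℕ} (hx : k ≤ x) : T.guardedVar x := by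
  induction T generalizing k x with
  | end_ => trivial
  | choice p d br ih => trivial
  | mu T ih => exact ih h (Nat.succ_le_succ hx)
  | var n =>
      intro he
      subst he
      have hlt : n < k := h
      omega

theorem unfold_closed {T : SType A} (h : (SType.mu T).closed) : T.unfold.closed := by
  refine subst_closedUnder (T := T) (k := 1) h ?_
  intro n hn
  interval_cases n
  exact h

theorem unfold_wf {T : SType A} (hw : (SType.mu T).wf) : T.unfold.wf := by
  refine wf_subst hw.1 ?_
  intro n
  cases n with
  | zero => exact hw
  | succ n => trivial

end SType
end SessionCF
end AuxLemmas2

section AuxLemmas3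
namespace SessionCF
variable {A : Type}
namespace SType

/-- Number of leading `mu` binders. -/
def muH : SType A → ℕ
  | .mu T => muH T + 1
  | _ => 0

/-- The head (after leading `mu`s) is not a variable. -/
def headOk : SType A → Prop
  | .mu T => headOk T
  | .var _ => False
  | _ => True

theorem headOk_of {T : SType A} {k : ℕ} (hw : T.wf) (hc : T.closedUnder k)
    (hg : ∀ x < k, T.guardedVar x) : T.headOk := by
  induction T generalizing k with
  | end_ => trivial
  | choice p d br ih => trivial
  | mu T ih =>
      refine ih hw.1 hc ?_
      intro x hx
      cases x with
      | zero => exact hw.2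
      | succ x => exact hg x (Nat.lt_of_succ_lt_succ hx)
  | var n =>
      have h1 : n < k := hc
      exact absurd rfl (hg n h1)

theorem muH_subst {T : SType A} (h : T.headOk) (σ : ℕ → SType A) :
    (T.subst σ).muH = T.muH := by
  induction T generalizing σ with
  | end_ => rfl
  | choice p d br ih => rfl
  | mu T ih => simp [subst, muH, ih h]
  | var n => exact absurd h (by simp [headOk])

theorem headOk_body {T : SType A} (hc : (SType.mu T).closed) (hw : (SType.mu T).wf) :
    T.headOk := by
  refine headOk_of hw.1 (show T.closedUnder 1 from hc) ?_
  intro x hx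
  interval_cases x
  exact hw.2

theorem muH_unfold {T : SType A} (hc : (SType.mu T).closed) (hw : (SType.mu T).wf) :
    T.unfold.muH = T.muH := muH_subst (headOk_body hc hw) _

theorem unfold_subst (T : SType A) (σ : ℕ → SType A) :
    (T.subst (liftS σ)).unfold = T.subst (consS ((SType.mu T).subst σ) σ) := by
  unfold unfold
  rw [subst_subst]
  congr 1
  funext n
  cases n with
  | zero => rfl
  | succ n =>
      simp only [liftS, rename_subst]
      show (σ n).subst (fun m => consS ((SType.mu T).subst σ) SType.var (m+1)) = σ n
      have h2 : (fun m => consS ((SType.mu T).subst σ) (SType.var : ℕ → SType A) (m+1))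
          = (SType.var : ℕ → SType A) := by
        funext m; rfl
      rw [h2, subst_id]

end SType

theorem no_step_end {α : Act A} {V : SType A} : ¬ Step (SType.end_ : SType A) α V := by
  intro h
  cases h

theorem step_mu_iff {T : SType A} {α : Act A} {V : SType A} :
    Step (SType.mu T) α V ↔ Step T.unfold α V := by
  constructor
  · intro h; cases h; assumption
  · exact Step.unf

theorem step_choice_inv {p : Pol} {d : Finset A} {br : A → SType A} {q : Pol} {a : A}
    {V : SType A} (h : Step (SType.choice p d br) (q, a) V) :
    q = p ∧ a ∈ d ∧ V = br a := by
  cases h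
  exact ⟨rfl, by assumption, rfl⟩

end SessionCF
end AuxLemmas3

section AuxLemmas4
namespace SessionCF
variable {A : Type}

/-- Equality up to irrelevant branches. -/
inductive TEq : SType A → SType A → Prop
  | end_ : TEq .end_ .end_
  | choice {p : Pol} {d : Finset A} {br br' : A → SType A} :
      (∀ a ∈ d, TEq (br a) (br' a)) → TEq (.choice p d br) (.choice p d br')
  | mu {T T' : SType A} : TEq T T' → TEq (.mu T) (.mu T')
  | var (n : ℕ) : TEq (.var n) (.var n)

theorem TEq.refl (T : SType A) : TEq T T := by
  induction T with
  | end_ => exact .end_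
  | choice p d br ih => exact .choice (fun a _ => ih a)
  | mu T ih => exact .mu ih
  | var n => exact .var n

theorem TEq.symm {T T' : SType A} (h : TEq T T') : TEq T' T := by
  induction h with
  | end_ => exact .end_
  | choice h ih => exact .choice ih
  | mu h ih => exact .mu ih
  | var n => exact .var n

theorem TEq.rename {T T' : SType A} (h : TEq T T') (f : ℕ → ℕ) :
    TEq (T.rename f) (T'.rename f) := by
  induction h generalizing f with
  | end_ => exact .end_
  | choice h ih => exact .choice (fun a ha => ih a ha f)
  | mu h ih => exact .mu (ih _)
  | var n => exact .var _

theorem TEq.subst {T T' : SType A} (h : TEq T T') {σ σ' : ℕ → SType A}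
    (hσ : ∀ n, TEq (σ n) (σ' n)) : TEq (T.subst σ) (T'.subst σ') := by
  induction h generalizing σ σ' with
  | end_ => exact .end_
  | choice h ih => exact .choice (fun a ha => ih a ha hσ)
  | mu h ih =>
      refine .mu (ih ?_)
      intro n
      cases n with
      | zero => exact .var 0
      | succ n => exact (hσ n).rename _
  | var n => exact hσ n

theorem TEq.unfold {T T' : SType A} (h : TEq T T') :
    TEq T.unfold T'.unfold := by
  refine h.subst ?_
  intro n
  cases n with
  | zero => exact .mu h
  | succ n => exact .var n

/-- `T.subst σ` is branch-equivalent to `T` for closed enough `T`. -/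
theorem teq_subst_self {T : SType A} {k : ℕ} (hc : T.closedUnder k)
    {σ : ℕ → SType A} (hσ : ∀ n < k, σ n = .var n) : TEq T (T.subst σ) := by
  induction T generalizing k σ with
  | end_ => exact .end_
  | choice p d br ih => exact .choice (fun a ha => ih a (hc a ha) hσ)
  | mu T ih =>
      refine .mu (ih hc ?_)
      intro n hn
      cases n with
      | zero => rfl
      | succ n => simp [SType.liftS, hσ n (Nat.lt_of_succ_lt_succ hn), SType.rename]
  | var n =>
      show TEq (SType.var n) (σ n)
      rw [hσ n hc]
      exact .var n

theorem SubK.mono {s : Pol} {k : ℕ} {T U : SType A} (h : SubK s k T U) :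
    ∀ j ≤ k, SubK s j T U := by
  induction h with
  | zero => intro j hj; interval_cases j; exact .zero
  | end_ =>
      intro j hj
      cases j with
      | zero => exact .zero
      | succ j => exact .end_
  | ch hsub hbr ih =>
      intro j hj
      cases j with
      | zero => exact .zero
      | succ j => exact .ch hsub (fun a ha => ih a ha j (Nat.lt_succ_iff.mp hj))
  | coch hsub hbr ih =>
      intro j hj
      cases j with
      | zero => exact .zero
      | succ j => exact .coch hsub (fun a ha => ih a ha j (Nat.lt_succ_iff.mp hj))
  | recL h ih =>
      intro j hj
      cases j with
      | zero => exact .zero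
      | succ j => exact .recL (ih (j+1) hj)
  | recR h ih =>
      intro j hj
      cases j with
      | zero => exact .zero
      | succ j => exact .recR (ih (j+1) hj)

theorem SubK.transfer {s : Pol} {k : ℕ} {T U : SType A} (h : SubK s k T U)
    {T' U' : SType A} (hT : TEq T T') (hU : TEq U U') : SubK s k T' U' := by
  induction h generalizing T' U' with
  | zero => exact .zero
  | end_ => cases hT; cases hU; exact .end_
  | ch hsub hbr ih =>
      cases hT with | choice hbT =>
      cases hU with | choice hbU =>
      exact .ch hsub (fun a ha => ih a ha (hbT a ha) (hbU a (hsub ha)))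
  | coch hsub hbr ih =>
      cases hT with | choice hbT =>
      cases hU with | choice hbU =>
      exact .coch hsub (fun a ha => ih a ha (hbT a (hsub ha)) (hbU a ha))
  | recL h ih =>
      cases hT with | mu hT0 =>
      exact .recL (ih hT0.unfold hU)
  | recR h ih =>
      cases hU with | mu hU0 =>
      exact .recR (ih hT hU0.unfold)

theorem subk_unfold_left {s : Pol} {k : ℕ} {T U : SType A}
    (h : SubK s k T U) : ∀ T₀, T = .mu T₀ → SubK s k T₀.unfold U := by
  induction h with
  | zero => exact fun _ _ => .zero
  | end_ => intro T₀ h; cases h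
  | ch hsub hbr ih => intro T₀ h; cases h
  | coch hsub hbr ih => intro T₀ h; cases h
  | recL h ih =>
      intro T₀ he
      cases he
      assumption
  | recR h ih =>
      intro T₀ he
      exact .recR (ih T₀ he)

theorem subk_unfold_right {s : Pol} {k : ℕ} {T U : SType A}
    (h : SubK s k T U) : ∀ U₀, U = .mu U₀ → SubK s k T U₀.unfold := by
  induction h with
  | zero => exact fun _ _ => .zero
  | end_ => intro U₀ h; cases h
  | ch hsub hbr ih => intro U₀ h; cases h
  | coch hsub hbr ih => intro U₀ h; cases h
  | recR h ih =>
      intro U₀ he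
      cases he
      assumption
  | recL h ih =>
      intro U₀ he
      exact .recL (ih U₀ he)

theorem subk_mu_right {s : Pol} {k : ℕ} {T U₀ : SType A}
    (h : SubK s k T U₀.unfold) : SubK s k T (.mu U₀) := by
  cases k with
  | zero => exact .zero
  | succ k => exact .recR h

theorem subk_mu_left {s : Pol} {k : ℕ} {T₀ U : SType A}
    (h : SubK s k T₀.unfold U) : SubK s k (.mu T₀) U := by
  cases k with
  | zero => exact .zero
  | succ k => exact .recL h

theorem subk_end_choice {s : Pol} {k : ℕ} {p : Pol} {d : Finset A} {br : A → SType A}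
    (h : SubK s (k+1) SType.end_ (.choice p d br)) : False := by
  cases h

theorem subk_choice_end {s : Pol} {k : ℕ} {p : Pol} {d : Finset A} {br : A → SType A}
    (h : SubK s (k+1) (.choice p d br) SType.end_) : False := by
  cases h

theorem subk_choice_inv {s : Pol} {k : ℕ} {p p' : Pol} {d d' : Finset A}
    {br br' : A → SType A}
    (h : SubK s (k+1) (.choice p d br) (.choice p' d' br')) :
    (p = s ∧ p' = s ∧ d ⊆ d' ∧ ∀ a ∈ d, SubK s k (br a) (br' a)) ∨
    (p = s.dual ∧ p' = s.dual ∧ d' ⊆ d ∧ ∀ a ∈ d', SubK s k (br a) (br' a)) := by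
  cases h with
  | ch hsub hbr => exact Or.inl ⟨rfl, rfl, hsub, hbr⟩
  | coch hsub hbr => exact Or.inr ⟨rfl, rfl, hsub, hbr⟩

theorem subk_end_end {s : Pol} {k : ℕ} : SubK (A := A) s k SType.end_ SType.end_ := by
  cases k with
  | zero => exact .zero
  | succ k => exact .end_

end SessionCF
end AuxLemmas4

section AuxLemmas5
namespace SessionCF
variable {A : Type}

theorem not_closed_var {n : ℕ} (h : (SType.var n : SType A).closed) : False := by
  have : n < 0 := h
  omega

theorem subtype_to_subK {s : Pol} {T U : SType A} (h : Subtype s T U)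
    (hTc : T.closed) (hTw : T.wf) (hUc : U.closed) (hUw : U.wf) (k : ℕ) :
    SubK s k T U := by
  obtain ⟨R, hR, hTU⟩ := h
  induction k generalizing T U with
  | zero => exact .zero
  | succ k ihk =>
      have main : ∀ n, ∀ T U : SType A, T.muH + U.muH ≤ n → T.closed → T.wf →
          U.closed → U.wf → R T U → SubK s (k+1) T U := by
        intro n
        induction n using Nat.strong_induction_on with
        | _ n ihn =>
          intro T U hm hTc hTw hUc hUw hRTU
          rcases hR T U hRTU with ⟨he1, he2⟩ |
            ⟨dT, brT, dU, brU, rfl, rfl, hsub, hbr⟩ |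
            ⟨dT, brT, dU, brU, rfl, rfl, hsub, hbr⟩ |
            ⟨T₀, rfl, hr⟩ | ⟨U₀, rfl, hr⟩
          · subst he1; subst he2; exact .end_
          · refine .ch hsub (fun a ha => ihk ?_ ?_ ?_ ?_ (hbr a ha))
            · exact hTc a ha
            · exact hTw.2 a ha
            · exact hUc a (hsub ha)
            · exact hUw.2 a (hsub ha)
          · refine .coch hsub (fun a ha => ihk ?_ ?_ ?_ ?_ (hbr a ha))
            · exact hTc a (hsub ha)
            · exact hTw.2 a (hsub ha)
            · exact hUc a ha
            · exact hUw.2 a ha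
          · refine .recL (ihn (T₀.unfold.muH + U.muH) ?_ T₀.unfold U le_rfl
              (SType.unfold_closed hTc) (SType.unfold_wf hTw) hUc hUw hr)
            have h1 : T₀.unfold.muH = T₀.muH := SType.muH_unfold hTc hTw
            have h2 : (SType.mu T₀).muH = T₀.muH + 1 := rfl
            omega
          · refine .recR (ihn (T.muH + U₀.unfold.muH) ?_ T U₀.unfold le_rfl
              hTc hTw (SType.unfold_closed hUc) (SType.unfold_wf hUw) hr)
            have h1 : U₀.unfold.muH = U₀.muH := SType.muH_unfold hUc hUw
            have h2 : (SType.mu U₀).muH = U₀.muH + 1 := rfl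
            omega
      exact main _ T U le_rfl hTc hTw hUc hUw hTU

theorem subK_to_subtype {s : Pol} {T U : SType A}
    (hTc : T.closed) (hTw : T.wf) (hUc : U.closed) (hUw : U.wf)
    (h : ∀ k, SubK s k T U) : Subtype s T U := by
  refine ⟨fun X Y => X.closed ∧ X.wf ∧ Y.closed ∧ Y.wf ∧ ∀ k, SubK s k X Y,
    ?_, hTc, hTw, hUc, hUw, h⟩
  rintro X Y ⟨hXc, hXw, hYc, hYw, hXY⟩
  unfold SubStep
  cases X with
  | var n => exact (not_closed_var hXc).elim
  | mu X₀ =>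
      refine Or.inr (Or.inr (Or.inr (Or.inl ⟨X₀, rfl, ?_⟩)))
      exact ⟨SType.unfold_closed hXc, SType.unfold_wf hXw, hYc, hYw,
        fun k => subk_unfold_left (hXY k) X₀ rfl⟩
  | end_ =>
      cases Y with
      | var n => exact (not_closed_var hYc).elim
      | mu Y₀ =>
          refine Or.inr (Or.inr (Or.inr (Or.inr ⟨Y₀, rfl, ?_⟩)))
          exact ⟨hXc, hXw, SType.unfold_closed hYc, SType.unfold_wf hYw,
            fun k => subk_unfold_right (hXY k) Y₀ rfl⟩
      | end_ => exact Or.inl ⟨rfl, rfl⟩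
      | choice p d br => exact (subk_end_choice (hXY 1)).elim
  | choice p d br =>
      cases Y with
      | var n => exact (not_closed_var hYc).elim
      | mu Y₀ =>
          refine Or.inr (Or.inr (Or.inr (Or.inr ⟨Y₀, rfl, ?_⟩)))
          exact ⟨hXc, hXw, SType.unfold_closed hYc, SType.unfold_wf hYw,
            fun k => subk_unfold_right (hXY k) Y₀ rfl⟩
      | end_ => exact (subk_choice_end (hXY 1)).elim
      | choice p' d' br' =>
          rcases subk_choice_inv (hXY 1) with ⟨hp, hp', hsub, _⟩ | ⟨hp, hp', hsub, _⟩
          · subst hp; subst hp'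
            refine Or.inr (Or.inl ⟨d, br, d', br', rfl, rfl, hsub, fun a ha => ?_⟩)
            refine ⟨hXc a ha, hXw.2 a ha, hYc a (hsub ha), hYw.2 a (hsub ha), fun k => ?_⟩
            rcases subk_choice_inv (hXY (k+1)) with ⟨_, _, _, hbr⟩ | ⟨he, _, _, _⟩
            · exact hbr a ha
            · exact absurd he.symm (Pol.dual_ne _)
          · subst hp; subst hp'
            refine Or.inr (Or.inr (Or.inl ⟨d, br, d', br', rfl, rfl, hsub, fun a ha => ?_⟩))
            refine ⟨hXc a (hsub ha), hXw.2 a (hsub ha), hYc a ha, hYw.2 a ha, fun k => ?_⟩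
            rcases subk_choice_inv (hXY (k+1)) with ⟨he, _, _, _⟩ | ⟨_, _, _, hbr⟩
            · exact absurd he (Pol.dual_ne _)
            · exact hbr a ha

end SessionCF
end AuxLemmas5

section AuxLemmas6
namespace SessionCF
variable {A : Type}
namespace Formula

theorem rename_rename (φ : Formula A) (f g : ℕ → ℕ) :
    (φ.rename f).rename g = φ.rename (fun n => g (f n)) := by
  induction φ generalizing f g with
  | tt => rfl
  | ff => rfl
  | and φ ψ ih1 ih2 => simp [rename, ih1, ih2]
  | or φ ψ ih1 ih2 => simp [rename, ih1, ih2]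
  | box α φ ih => simp [rename, ih]
  | dia α φ ih => simp [rename, ih]
  | nu φ ih =>
      simp [rename, ih]
      congr 1
      funext n
      cases n <;> simp [SType.liftR]
  | var n => rfl

theorem rename_subst (φ : Formula A) (f : ℕ → ℕ) (τ : ℕ → Formula A) :
    (φ.rename f).subst τ = φ.subst (fun n => τ (f n)) := by
  induction φ generalizing f τ with
  | tt => rfl
  | ff => rfl
  | and φ ψ ih1 ih2 => simp [rename, subst, ih1, ih2]
  | or φ ψ ih1 ih2 => simp [rename, subst, ih1, ih2]
  | box α φ ih => simp [rename, subst, ih]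
  | dia α φ ih => simp [rename, subst, ih]
  | nu φ ih =>
      simp [rename, subst, ih]
      congr 1
      funext n
      cases n <;> simp [SType.liftR, liftF]
  | var n => rfl

theorem subst_rename (φ : Formula A) (τ : ℕ → Formula A) (f : ℕ → ℕ) :
    (φ.subst τ).rename f = φ.subst (fun n => (τ n).rename f) := by
  induction φ generalizing f τ with
  | tt => rfl
  | ff => rfl
  | and φ ψ ih1 ih2 => simp [rename, subst, ih1, ih2]
  | or φ ψ ih1 ih2 => simp [rename, subst, ih1, ih2]
  | box α φ ih => simp [rename, subst, ih]
  | dia α φ ih => simp [rename, subst, ih]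
  | nu φ ih =>
      simp [rename, subst, ih]
      congr 1
      funext n
      cases n with
      | zero => simp [SType.liftR, liftF, rename]
      | succ n => simp [liftF, rename_rename, SType.liftR]
  | var n => rfl

theorem subst_subst (φ : Formula A) (τ τ' : ℕ → Formula A) :
    (φ.subst τ).subst τ' = φ.subst (fun n => (τ n).subst τ') := by
  induction φ generalizing τ τ' with
  | tt => rfl
  | ff => rfl
  | and φ ψ ih1 ih2 => simp [subst, ih1, ih2]
  | or φ ψ ih1 ih2 => simp [subst, ih1, ih2]
  | box α φ ih => simp [subst, ih]
  | dia α φ ih => simp [subst, ih]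
  | nu φ ih =>
      simp [subst, ih]
      congr 1
      funext n
      cases n with
      | zero => simp [liftF, subst]
      | succ n => simp [liftF, rename_subst, subst_rename]
  | var n => rfl

theorem subst_id (φ : Formula A) : φ.subst .var = φ := by
  induction φ with
  | tt => rfl
  | ff => rfl
  | and φ ψ ih1 ih2 => simp [subst, ih1, ih2]
  | or φ ψ ih1 ih2 => simp [subst, ih1, ih2]
  | box α φ ih => simp [subst, ih]
  | dia α φ ih => simp [subst, ih]
  | nu φ ih =>
      have : liftF (A := A) .var = .var := by
        funext n; cases n <;> simp [liftF, rename]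
      simp [subst, this, ih]
  | var n => rfl

theorem subst_closedUnder_id {φ : Formula A} {k : ℕ} (h : φ.closedUnder k)
    {τ : ℕ → Formula A} (hτ : ∀ n < k, τ n = .var n) : φ.subst τ = φ := by
  induction φ generalizing k τ with
  | tt => rfl
  | ff => rfl
  | and φ ψ ih1 ih2 => simp [subst, ih1 h.1 hτ, ih2 h.2 hτ]
  | or φ ψ ih1 ih2 => simp [subst, ih1 h.1 hτ, ih2 h.2 hτ]
  | box α φ ih => simp [subst, ih h hτ]
  | dia α φ ih => simp [subst, ih h hτ]
  | nu φ ih =>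
      simp only [subst, nu.injEq]
      refine ih h ?_
      intro n hn
      cases n with
      | zero => rfl
      | succ n => simp [liftF, hτ n (Nat.lt_of_succ_lt_succ hn), rename]
  | var n =>
      show τ n = var n
      exact hτ n h

theorem subst_liftF_consF (φ : Formula A) (τ : ℕ → Formula A) (χ : Formula A) :
    (φ.subst (liftF τ)).subst (consF χ .var) = φ.subst (consF χ τ) := by
  rw [subst_subst]
  congr 1
  funext n
  cases n with
  | zero => rfl
  | succ n =>
      show ((τ n).rename Nat.succ).subst (consF χ .var) = τ n
      rw [rename_subst]
      have : (fun m => consF χ (Formula.var : ℕ → Formula A) (Nat.succ m))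
          = (Formula.var : ℕ → Formula A) := by funext m; rfl
      rw [this, subst_id]

theorem subst_consF_subst (φ : Formula A) (χ : Formula A) (τ : ℕ → Formula A) :
    (φ.subst (consF χ .var)).subst τ = φ.subst (consF (χ.subst τ) τ) := by
  rw [subst_subst]
  congr 1
  funext n
  cases n with
  | zero => rfl
  | succ n => rfl

theorem nuApprox_subst (φ : Formula A) (τ : ℕ → Formula A) (n : ℕ) :
    nuApprox (φ.subst (liftF τ)) n = (nuApprox φ n).subst τ := by
  induction n with
  | zero => rfl
  | succ n ih =>
      show (φ.subst (liftF τ)).inst (nuApprox (φ.subst (liftF τ)) n)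
          = (φ.inst (nuApprox φ n)).subst τ
      rw [ih]
      unfold inst
      rw [subst_liftF_consF, subst_consF_subst]

end Formula

theorem bigAnd_subst [Fintype A] [LinearOrder A] (l : List (Formula A)) (τ : ℕ → Formula A) :
    (bigAnd l).subst τ = bigAnd (l.map (fun φ => φ.subst τ)) := by
  induction l with
  | nil => rfl
  | cons φ l ih => simp [bigAnd, Formula.subst, ih]

theorem bigOr_subst [Fintype A] [LinearOrder A] (l : List (Formula A)) (τ : ℕ → Formula A) :
    (bigOr l).subst τ = bigOr (l.map (fun φ => φ.subst τ)) := by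
  induction l with
  | nil => rfl
  | cons φ l ih => simp [bigOr, Formula.subst, ih]

theorem sat_bigAnd_iff [Fintype A] [LinearOrder A] {U : SType A} {l : List (Formula A)} :
    Sat U (bigAnd l) ↔ ∀ φ ∈ l, Sat U φ := by
  induction l with
  | nil => simp [bigAnd]; exact .tt
  | cons φ l ih =>
      constructor
      · intro h
        cases h with
        | and h1 h2 =>
            intro ψ hψ
            rcases List.mem_cons.mp hψ with rfl | hm
            · exact h1
            · exact ih.mp h2 _ hm
      · intro h
        exact .and (h φ (by simp)) (ih.mpr (fun ψ hψ => h ψ (by simp [hψ])))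

theorem sat_bigOr_iff [Fintype A] [LinearOrder A] {U : SType A} {l : List (Formula A)} :
    Sat U (bigOr l) ↔ ∃ φ ∈ l, Sat U φ := by
  induction l with
  | nil =>
      simp [bigOr]
      intro h
      cases h
  | cons φ l ih =>
      constructor
      · intro h
        cases h with
        | orl h1 => exact ⟨φ, by simp, h1⟩
        | orr h2 =>
            obtain ⟨ψ, hm, hs⟩ := ih.mp h2
            exact ⟨ψ, by simp [hm], hs⟩
      · rintro ⟨ψ, hm, hs⟩
        rcases List.mem_cons.mp hm with rfl | hm
        · exact .orl hs
        · exact .orr (ih.mpr ⟨ψ, hm, hs⟩)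

theorem closedUnder_bigAnd [Fintype A] [LinearOrder A] {l : List (Formula A)} {k : ℕ}
    (h : ∀ φ ∈ l, φ.closedUnder k) : (bigAnd l).closedUnder k := by
  induction l with
  | nil => trivial
  | cons φ l ih => exact ⟨h φ (by simp), ih (fun ψ hψ => h ψ (by simp [hψ]))⟩

theorem closedUnder_bigOr [Fintype A] [LinearOrder A] {l : List (Formula A)} {k : ℕ}
    (h : ∀ φ ∈ l, φ.closedUnder k) : (bigOr l).closedUnder k := by
  induction l with
  | nil => trivial
  | cons φ l ih => exact ⟨h φ (by simp), ih (fun ψ hψ => h ψ (by simp [hψ]))⟩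

theorem mem_allActs [Fintype A] [LinearOrder A] (α : Act A) : α ∈ allActs A := by
  obtain ⟨p, a⟩ := α
  cases p <;> simp [allActs, List.mem_append, List.mem_map, Finset.mem_sort]

theorem charF_closedUnder [Fintype A] [LinearOrder A] {T : SType A} {k : ℕ} {s : Pol}
    (h : T.closedUnder k) : (charF T s).closedUnder k := by
  induction T generalizing k with
  | end_ =>
      refine closedUnder_bigAnd ?_
      intro φ hφ
      obtain ⟨α, _, rfl⟩ := List.mem_map.mp hφ
      trivial
  | choice p d br ih =>
      by_cases hp : p = s
      · simp only [charF, if_pos hp]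
        refine closedUnder_bigAnd ?_
        intro φ hφ
        obtain ⟨a, ha, rfl⟩ := List.mem_map.mp hφ
        exact ih a (h a (Finset.mem_sort (α := A) (· ≤ ·) |>.mp ha))
      · simp only [charF, if_neg hp]
        refine ⟨closedUnder_bigAnd ?_, closedUnder_bigOr ?_, closedUnder_bigAnd ?_⟩
        · intro φ hφ
          obtain ⟨a, ha, rfl⟩ := List.mem_map.mp hφ
          exact ih a (h a (Finset.mem_sort (α := A) (· ≤ ·) |>.mp ha))
        · intro φ hφ
          obtain ⟨a, ha, rfl⟩ := List.mem_map.mp hφ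
          trivial
        · intro φ hφ
          obtain ⟨α, _, rfl⟩ := List.mem_map.mp hφ
          trivial
  | mu T ih => exact ih h
  | var n => exact h

theorem sat_transfer {T : SType A} {φ : Formula A} (h : Sat T φ) :
    ∀ {T₂ : SType A}, (∀ α V, Step T α V ↔ Step T₂ α V) → Sat T₂ φ := by
  induction h with
  | tt => exact fun _ => .tt
  | and h1 h2 ih1 ih2 => exact fun hst => .and (ih1 hst) (ih2 hst)
  | orl h ih => exact fun hst => .orl (ih hst)
  | orr h ih => exact fun hst => .orr (ih hst)
  | box h ih =>
      intro T₂ hst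
      exact .box (fun V hstep => ih V ((hst _ _).mpr hstep) (fun _ _ => Iff.rfl))
  | dia hstep hsat ih =>
      intro T₂ hst
      exact .dia ((hst _ _).mp hstep) (ih (fun _ _ => Iff.rfl))
  | nu h ih => exact fun hst => .nu (fun n => ih n hst)

theorem sat_mu_iff {T₀ : SType A} {φ : Formula A} :
    Sat (SType.mu T₀) φ ↔ Sat T₀.unfold φ := by
  constructor
  · exact fun h => sat_transfer h (fun α V => step_mu_iff)
  · exact fun h => sat_transfer h (fun α V => step_mu_iff.symm)

end SessionCF
end AuxLemmas6

section AuxLemmas7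
namespace SessionCF
variable {A : Type}

theorem subst_closed_all {T : SType A} {σ : ℕ → SType A} {j : ℕ}
    (hσ : ∀ n, (σ n).closedUnder j) : (T.subst σ).closedUnder j := by
  induction T generalizing σ j with
  | end_ => trivial
  | choice p d br ih => exact fun a _ => ih a hσ
  | mu T ih =>
      refine ih ?_
      intro n
      cases n with
      | zero => simpa [SType.liftS, SType.closedUnder] using Nat.succ_pos j
      | succ n =>
          simp only [SType.liftS]
          exact SType.rename_closedUnder (hσ n) (fun m hm => Nat.succ_lt_succ hm)
  | var n => exact hσ n

theorem muH_lt {V₀ : SType A} (hVc : (SType.mu V₀).closed) (hVw : (SType.mu V₀).wf) :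
    V₀.unfold.muH < (SType.mu V₀).muH := by
  have h1 : V₀.unfold.muH = V₀.muH := SType.muH_unfold hVc hVw
  have h2 : (SType.mu V₀).muH = V₀.muH + 1 := rfl
  omega

variable [Fintype A] [LinearOrder A]

theorem sat_charF_end {s : Pol} :
    ∀ (V : SType A), V.closed → V.wf → (∀ k, SubK s k SType.end_ V) →
      Sat V (charF (SType.end_ : SType A) s) := by
  have main : ∀ n (V : SType A), V.muH ≤ n → V.closed → V.wf →
      (∀ k, SubK s k SType.end_ V) → Sat V (charF (SType.end_ : SType A) s) := by
    intro n
    induction n using Nat.strong_induction_on with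
    | _ n ihn =>
      intro V hm hVc hVw hsub
      cases V with
      | var m => exact (not_closed_var hVc).elim
      | mu V₀ =>
          refine sat_mu_iff.mpr (ihn V₀.unfold.muH ?_ V₀.unfold le_rfl
            (SType.unfold_closed hVc) (SType.unfold_wf hVw)
            (fun k => subk_unfold_right (hsub k) V₀ rfl))
          have := muH_lt hVc hVw
          omega
      | end_ =>
          show Sat _ (bigAnd _)
          refine sat_bigAnd_iff.mpr ?_
          intro φ hφ
          obtain ⟨α, _, rfl⟩ := List.mem_map.mp hφ
          exact .box (fun V' hst => (no_step_end hst).elim)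
      | choice p d br => exact (subk_end_choice (hsub 1)).elim
  exact fun V => main V.muH V le_rfl

theorem charF_end_subK {s : Pol} :
    ∀ (V : SType A), V.closed → V.wf → Sat V (charF (SType.end_ : SType A) s) →
      ∀ k, SubK s k SType.end_ V := by
  have main : ∀ n (V : SType A), V.muH ≤ n → V.closed → V.wf →
      Sat V (charF (SType.end_ : SType A) s) → ∀ k, SubK s k SType.end_ V := by
    intro n
    induction n using Nat.strong_induction_on with
    | _ n ihn =>
      intro V hm hVc hVw hsat k
      cases V with
      | var m => exact (not_closed_var hVc).elim
      | mu V₀ =>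
          refine subk_mu_right (ihn V₀.unfold.muH ?_ V₀.unfold le_rfl
            (SType.unfold_closed hVc) (SType.unfold_wf hVw) (sat_mu_iff.mp hsat) k)
          have := muH_lt hVc hVw
          omega
      | end_ => exact subk_end_end
      | choice p d br =>
          obtain ⟨a, ha⟩ := hVw.1
          have hmem : (Formula.box ((p, a) : Act A) Formula.ff)
              ∈ (allActs A).map (fun α => Formula.box α Formula.ff) :=
            List.mem_map.mpr ⟨(p, a), mem_allActs _, rfl⟩
          have hbox := sat_bigAnd_iff.mp hsat _ hmem
          cases hbox with
          | box hb =>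
              have := hb (br a) (Step.choice ha)
              cases this
  exact fun V => main V.muH V le_rfl

/-- Forward bridge: `∀k`-limited subtyping implies satisfaction of the
characteristic formula, in environment form. -/
theorem satOfSubK {s : Pol} :
    ∀ (T : SType A), T.wf →
    ∀ (σ : ℕ → SType A) (τ : ℕ → Formula A),
    (∀ m, (σ m).closed ∧ (σ m).wf) →
    (∀ m (V : SType A), V.closed → V.wf → (∀ k, SubK s k (σ m) V) → Sat V (τ m)) →
    ∀ U : SType A, U.closed → U.wf → (∀ k, SubK s k (T.subst σ) U) →
    Sat U ((charF T s).subst τ) := by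
  intro T
  induction T with
  | var n =>
      intro _ σ τ hσ hτ U hUc hUw hsub
      exact hτ n U hUc hUw hsub
  | end_ =>
      intro _ σ τ hσ hτ U hUc hUw hsub
      rw [Formula.subst_closedUnder_id
        (charF_closedUnder (T := (SType.end_ : SType A)) (k := 0) trivial)
        (fun n hn => absurd hn (Nat.not_lt_zero n))]
      exact sat_charF_end U hUc hUw hsub
  | mu T₀ ih =>
      intro hw σ τ hσ hτ U hUc hUw hsub
      have key : ∀ n, ∀ V : SType A, V.closed → V.wf →
          (∀ k, SubK s k ((SType.mu T₀).subst σ) V) →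
          Sat V ((Formula.nuApprox (charF T₀ s) n).subst τ) := by
        intro n
        induction n with
        | zero => intro V _ _ _; exact .tt
        | succ n ihn =>
            intro V hVc hVw hsubV
            have hgoal : (Formula.nuApprox (charF T₀ s) (n+1)).subst τ
                = (charF T₀ s).subst
                  (Formula.consF ((Formula.nuApprox (charF T₀ s) n).subst τ) τ) := by
              show ((charF T₀ s).inst _).subst τ = _
              unfold Formula.inst
              rw [Formula.subst_consF_subst]
            rw [hgoal]
            refine ih hw.1 (SType.consS ((SType.mu T₀).subst σ) σ)
              (Formula.consF ((Formula.nuApprox (charF T₀ s) n).subst τ) τ)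
              ?_ ?_ V hVc hVw ?_
            · intro m
              cases m with
              | zero =>
                  exact ⟨subst_closed_all (fun n' => (hσ n').1),
                    SType.wf_subst hw (fun n' => (hσ n').2)⟩
              | succ m => exact hσ m
            · intro m V' hV'c hV'w hsubV'
              cases m with
              | zero => exact ihn V' hV'c hV'w hsubV'
              | succ m => exact hτ m V' hV'c hV'w hsubV'
            · intro k
              have h1 := subk_unfold_left (hsubV k) (T₀.subst (SType.liftS σ)) rfl
              rwa [SType.unfold_subst] at h1
      show Sat U (Formula.nu ((charF T₀ s).subst (Formula.liftF τ)))
      refine .nu ?_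
      intro n
      rw [Formula.nuApprox_subst]
      exact key n U hUc hUw hsub
  | choice p d br ih =>
      intro hw σ τ hσ hτ U hUc hUw hsub
      have main : ∀ n (U : SType A), U.muH ≤ n → U.closed → U.wf →
          (∀ k, SubK s k ((SType.choice p d br).subst σ) U) →
          Sat U ((charF (SType.choice p d br) s).subst τ) := by
        intro n
        induction n using Nat.strong_induction_on with
        | _ n ihn =>
          intro U hm hUc hUw hsub
          cases U with
          | var m => exact (not_closed_var hUc).elim
          | mu U₀ =>
              refine sat_mu_iff.mpr (ihn U₀.unfold.muH ?_ U₀.unfold le_rfl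
                (SType.unfold_closed hUc) (SType.unfold_wf hUw)
                (fun k => subk_unfold_right (hsub k) U₀ rfl))
              have := muH_lt hUc hUw
              omega
          | end_ => exact (subk_choice_end (hsub 1)).elim
          | choice p' dU brU =>
              rcases subk_choice_inv (hsub 1) with ⟨hp, hp', hd, _⟩ | ⟨hp, hp', hd, _⟩
              · -- same polarity as s
                have hbrall : ∀ a ∈ d, ∀ k, SubK s k ((br a).subst σ) (brU a) := by
                  intro a ha k
                  rcases subk_choice_inv (hsub (k+1)) with ⟨_, _, _, hbr⟩ | ⟨he, _, _, _⟩
                  · exact hbr a ha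
                  · rw [hp] at he
                    exact absurd he.symm (Pol.dual_ne _)
                simp only [charF, if_pos hp, bigAnd_subst, List.map_map]
                refine sat_bigAnd_iff.mpr ?_
                intro φ hφ
                obtain ⟨a, ha, rfl⟩ := List.mem_map.mp hφ
                have had : a ∈ d := (Finset.mem_sort (α := A) (· ≤ ·)).mp ha
                show Sat _ (Formula.dia (p, a) ((charF (br a) s).subst τ))
                refine .dia (T' := brU a) ?_ ?_
                · rw [hp, hp']
                  exact Step.choice (hd had)
                · exact ih a (hw.2 a had) σ τ hσ hτ (brU a)
                    (hUc a (hd had)) (hUw.2 a (hd had)) (hbrall a had)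
              · -- dual polarity
                have hps : p ≠ s := by rw [hp]; exact Pol.dual_ne s
                have hbrall : ∀ a ∈ dU, ∀ k, SubK s k ((br a).subst σ) (brU a) := by
                  intro a ha k
                  rcases subk_choice_inv (hsub (k+1)) with ⟨he, _, _, _⟩ | ⟨_, _, _, hbr⟩
                  · rw [hp] at he
                    exact absurd he (Pol.dual_ne _)
                  · exact hbr a ha
                simp only [charF, if_neg hps, Formula.subst, bigAnd_subst, bigOr_subst,
                  List.map_map]
                refine .and ?_ (.and ?_ ?_)
                · refine sat_bigAnd_iff.mpr ?_
                  intro φ hφ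
                  obtain ⟨a, ha, rfl⟩ := List.mem_map.mp hφ
                  have had : a ∈ d := (Finset.mem_sort (α := A) (· ≤ ·)).mp ha
                  show Sat _ (Formula.box (p, a) ((charF (br a) s).subst τ))
                  refine .box ?_
                  intro V hst
                  rw [hp, hp'] at hst
                  obtain ⟨_, haU, rfl⟩ := step_choice_inv hst
                  exact ih a (hw.2 a had) σ τ hσ hτ (brU a)
                    (hUc a haU) (hUw.2 a haU) (hbrall a haU)
                · refine sat_bigOr_iff.mpr ?_
                  obtain ⟨a0, ha0⟩ := hUw.1
                  have ha0d : a0 ∈ d := hd ha0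
                  refine ⟨Formula.dia (p, a0) Formula.tt, ?_, ?_⟩
                  · refine List.mem_map.mpr ⟨a0, (Finset.mem_sort (α := A) (· ≤ ·)).mpr ha0d, rfl⟩
                  · refine .dia (T' := brU a0) ?_ .tt
                    rw [hp, hp']
                    exact Step.choice ha0
                · refine sat_bigAnd_iff.mpr ?_
                  intro φ hφ
                  obtain ⟨α, hα, rfl⟩ := List.mem_map.mp hφ
                  obtain ⟨q, a⟩ := α
                  show Sat _ (Formula.box (q, a) Formula.ff)
                  refine .box ?_
                  intro V hst
                  obtain ⟨hq, haU, rfl⟩ := step_choice_inv hst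
                  simp only [List.mem_filter, decide_not, Bool.not_eq_true',
                    decide_eq_false_iff_not] at hα
                  exact absurd ⟨by rw [hq, hp', ← hp], hd haU⟩ hα.2
      exact main U.muH U le_rfl hUc hUw hsub

end SessionCF
end AuxLemmas7

section AuxLemmas8
namespace SessionCF
variable {A : Type} [Fintype A] [LinearOrder A]

/-- Backward bridge: satisfaction of the characteristic formula implies
`k`-limited subtyping, in graded environment form. -/
theorem subKOfSat {s : Pol} :
    ∀ (T : SType A), T.wf →
    ∀ (σ : ℕ → SType A) (τ : ℕ → Formula A) (g : ℕ → ℕ) (k : ℕ),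
    (∀ m, (σ m).closed ∧ (σ m).wf) →
    (∀ m (V : SType A), V.closed → V.wf → Sat V (τ m) → SubK s (g m) (σ m) V) →
    (∀ m, k ≤ g m + 1) →
    (∀ m, ¬ T.guardedVar m → k ≤ g m) →
    ∀ U : SType A, U.closed → U.wf → Sat U ((charF T s).subst τ) →
    SubK s k (T.subst σ) U := by
  intro T
  induction T with
  | var n =>
      intro _ σ τ g k hσ hτ hk1 hk2 U hUc hUw hsat
      have hg : k ≤ g n := hk2 n (fun h => h rfl)
      exact (hτ n U hUc hUw hsat).mono k hg
  | end_ =>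
      intro _ σ τ g k hσ hτ hk1 hk2 U hUc hUw hsat
      rw [Formula.subst_closedUnder_id
        (charF_closedUnder (T := (SType.end_ : SType A)) (k := 0) trivial)
        (fun n hn => absurd hn (Nat.not_lt_zero n))] at hsat
      exact charF_end_subK U hUc hUw hsat k
  | mu T₀ ih =>
      intro hw σ τ g k hσ hτ hk1 hk2 U hUc hUw hsat
      have happrox : ∀ n, Sat U ((Formula.nuApprox (charF T₀ s) n).subst τ) := by
        intro n
        cases hsat with
        | nu h =>
            have := h n
            rwa [Formula.nuApprox_subst] at this
      have key : ∀ n, n ≤ k → ∀ V : SType A, V.closed → V.wf →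
          Sat V ((Formula.nuApprox (charF T₀ s) n).subst τ) →
          SubK s n ((SType.mu T₀).subst σ) V := by
        intro n
        induction n with
        | zero => intro _ V _ _ _; exact .zero
        | succ n ihn =>
            intro hn V hVc hVw hsatV
            have hrw : (Formula.nuApprox (charF T₀ s) (n+1)).subst τ
                = (charF T₀ s).subst
                  (Formula.consF ((Formula.nuApprox (charF T₀ s) n).subst τ) τ) := by
              show ((charF T₀ s).inst _).subst τ = _
              unfold Formula.inst
              rw [Formula.subst_consF_subst]
            rw [hrw] at hsatV
            show SubK s (n+1) (SType.mu (T₀.subst (SType.liftS σ))) V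
            refine subk_mu_left ?_
            rw [SType.unfold_subst]
            refine ih hw.1 (SType.consS ((SType.mu T₀).subst σ) σ)
              (Formula.consF ((Formula.nuApprox (charF T₀ s) n).subst τ) τ)
              (fun m => match m with | 0 => n | m+1 => g m) (n+1)
              ?_ ?_ ?_ ?_ V hVc hVw hsatV
            · intro m
              cases m with
              | zero =>
                  exact ⟨subst_closed_all (fun n' => (hσ n').1),
                    SType.wf_subst hw (fun n' => (hσ n').2)⟩
              | succ m => exact hσ m
            · intro m V' hV'c hV'w hs'
              cases m with
              | zero => exact ihn (Nat.le_of_succ_le hn) V' hV'c hV'w hs'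
              | succ m => exact hτ m V' hV'c hV'w hs'
            · intro m
              cases m with
              | zero => exact le_rfl
              | succ m =>
                  show n + 1 ≤ g m + 1
                  have := hk1 m
                  omega
            · intro m hg
              cases m with
              | zero => exact absurd hw.2 hg
              | succ m =>
                  show n + 1 ≤ g m
                  have := hk2 m hg
                  omega
      exact key k le_rfl U hUc hUw (happrox k)
  | choice p d br ih =>
      intro hw σ τ g k hσ hτ hk1 hk2 U hUc hUw hsat
      have main : ∀ n (U : SType A), U.muH ≤ n → U.closed → U.wf →
          Sat U ((charF (SType.choice p d br) s).subst τ) →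
          SubK s k ((SType.choice p d br).subst σ) U := by
        intro n
        induction n using Nat.strong_induction_on with
        | _ n ihn =>
          intro U hm hUc hUw hsat
          cases U with
          | var m => exact (not_closed_var hUc).elim
          | mu U₀ =>
              refine subk_mu_right (ihn U₀.unfold.muH ?_ U₀.unfold le_rfl
                (SType.unfold_closed hUc) (SType.unfold_wf hUw) (sat_mu_iff.mp hsat))
              have := muH_lt hUc hUw
              omega
          | end_ =>
              exfalso
              obtain ⟨a0, ha0⟩ := hw.1
              by_cases hps : p = s
              · simp only [charF, if_pos hps, bigAnd_subst, List.map_map] at hsat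
                have hmem := sat_bigAnd_iff.mp hsat
                  (Formula.dia (p, a0) ((charF (br a0) s).subst τ))
                  (List.mem_map.mpr ⟨a0, (Finset.mem_sort (α := A) (· ≤ ·)).mpr ha0, rfl⟩)
                cases hmem with
                | dia hst _ => exact no_step_end hst
              · simp only [charF, if_neg hps, Formula.subst, bigOr_subst, List.map_map] at hsat
                cases hsat with
                | and h1 h23 =>
                    cases h23 with
                    | and h2 h3 =>
                        obtain ⟨φ, hφ, hsφ⟩ := sat_bigOr_iff.mp h2
                        obtain ⟨a, ha, rfl⟩ := List.mem_map.mp hφ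
                        cases hsφ with
                        | dia hst _ => exact no_step_end hst
          | choice p' dU brU =>
              by_cases hps : p = s
              · -- same polarity
                simp only [charF, if_pos hps, bigAnd_subst, List.map_map] at hsat
                have hall := sat_bigAnd_iff.mp hsat
                have hbr : ∀ a ∈ d, ∃ V, Step (SType.choice p' dU brU) (p, a) V ∧
                    Sat V ((charF (br a) s).subst τ) := by
                  intro a ha
                  have := hall (Formula.dia (p, a) ((charF (br a) s).subst τ))
                    (List.mem_map.mpr ⟨a, (Finset.mem_sort (α := A) (· ≤ ·)).mpr ha, rfl⟩)
                  cases this with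
                  | dia hst hs => exact ⟨_, hst, hs⟩
                obtain ⟨a0, ha0⟩ := hw.1
                obtain ⟨V0, hst0, _⟩ := hbr a0 ha0
                obtain ⟨hq0, _, _⟩ := step_choice_inv hst0
                -- hq0 : p = p'
                have hd : d ⊆ dU := by
                  intro a ha
                  obtain ⟨V, hst, _⟩ := hbr a ha
                  exact (step_choice_inv hst).2.1
                have hbrsat : ∀ a ∈ d, Sat (brU a) ((charF (br a) s).subst τ) := by
                  intro a ha
                  obtain ⟨V, hst, hs⟩ := hbr a ha
                  obtain ⟨_, _, rfl⟩ := step_choice_inv hst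
                  exact hs
                show SubK s k (SType.choice p d (fun a => (br a).subst σ)) _
                cases k with
                | zero => exact .zero
                | succ k =>
                    rw [← hq0, hps]
                    refine .ch hd ?_
                    intro a ha
                    refine ih a (hw.2 a ha) σ τ g k hσ hτ ?_ ?_ (brU a)
                      (hUc a (hd ha)) (hUw.2 a (hd ha)) (hbrsat a ha)
                    · intro m
                      have := hk1 m
                      omega
                    · intro m _
                      have := hk1 m
                      omega
              · -- dual polarity
                simp only [charF, if_neg hps, Formula.subst, bigAnd_subst, bigOr_subst,
                  List.map_map] at hsat
                obtain ⟨h1, h2, h3⟩ : _ ∧ _ ∧ _ := by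
                  cases hsat with
                  | and h1 h23 =>
                      cases h23 with
                      | and h2 h3 => exact ⟨h1, h2, h3⟩
                have hp : p = s.dual := by
                  rcases Pol.eq_or_eq_dual p s with h | h
                  · exact absurd h hps
                  · exact h
                -- p' = p from the disjunction witness
                obtain ⟨φ, hφ, hsφ⟩ := sat_bigOr_iff.mp h2
                obtain ⟨a1, ha1, rfl⟩ := List.mem_map.mp hφ
                have hq1 : p = p' ∧ a1 ∈ dU := by
                  cases hsφ with
                  | dia hst _ =>
                      obtain ⟨hq, hmem, _⟩ := step_choice_inv hst
                      exact ⟨hq, hmem⟩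
                have hd : dU ⊆ d := by
                  intro a ha
                  by_contra hnd
                  have hmem : ((p, a) : Act A) ∈ (allActs A).filter
                      (fun α => ¬ (α.1 = p ∧ α.2 ∈ d)) := by
                    refine List.mem_filter.mpr ⟨mem_allActs _, ?_⟩
                    simp [hnd]
                  have hbox := sat_bigAnd_iff.mp h3 (Formula.box ((p, a) : Act A) Formula.ff)
                    (List.mem_map.mpr ⟨(p, a), hmem, rfl⟩)
                  cases hbox with
                  | box hb =>
                      have hst : Step (SType.choice p' dU brU) (p, a) (brU a) := by
                        rw [hq1.1]
                        exact Step.choice ha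
                      have := hb (brU a) hst
                      cases this
                have hbrsat : ∀ a ∈ dU, Sat (brU a) ((charF (br a) s).subst τ) := by
                  intro a ha
                  have hbox := sat_bigAnd_iff.mp h1
                    (Formula.box ((p, a) : Act A) ((charF (br a) s).subst τ))
                    (List.mem_map.mpr ⟨a, (Finset.mem_sort (α := A) (· ≤ ·)).mpr (hd ha), rfl⟩)
                  cases hbox with
                  | box hb =>
                      refine hb (brU a) ?_
                      rw [hq1.1]
                      exact Step.choice ha
                show SubK s k (SType.choice p d (fun a => (br a).subst σ)) _
                cases k with
                | zero => exact .zero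
                | succ k =>
                    rw [← hq1.1, hp]
                    refine .coch hd ?_
                    intro a ha
                    refine ih a (hw.2 a (hd ha)) σ τ g k hσ hτ ?_ ?_ (brU a)
                      (hUc a ha) (hUw.2 a ha) (hbrsat a ha)
                    · intro m
                      have := hk1 m
                      omega
                    · intro m _
                      have := hk1 m
                      omega
      exact main U.muH U le_rfl hUc hUw hsat

end SessionCF
end AuxLemmas8

section FinalAssembly
namespace SessionCF
variable {A : Type} [Fintype A] [LinearOrder A]

theorem subtype_iff_sat_charF_aux {s : Pol} {T U : SType A}
    (hTwf : T.wf) (hTcl : T.closed) (hUwf : U.wf) (hUcl : U.closed) :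
    Subtype s T U ↔ Sat U (charF T s) := by
  have hteq : TEq T (T.subst (fun _ => (SType.end_ : SType A))) :=
    teq_subst_self (k := 0) hTcl (fun n hn => absurd hn (Nat.not_lt_zero n))
  have hclF : (charF T s).closedUnder 0 := charF_closedUnder hTcl
  constructor
  · intro h
    have hk : ∀ k, SubK s k T U := fun k => subtype_to_subK h hTcl hTwf hUcl hUwf k
    have hk' : ∀ k, SubK s k (T.subst (fun _ => (SType.end_ : SType A))) U :=
      fun k => (hk k).transfer hteq (TEq.refl U)
    have hsat := satOfSubK T hTwf (fun _ => (SType.end_ : SType A))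
      (fun _ => charF (SType.end_ : SType A) s)
      (fun m => ⟨trivial, trivial⟩)
      (fun m V hVc hVw hs => sat_charF_end V hVc hVw hs)
      U hUcl hUwf hk'
    rwa [Formula.subst_closedUnder_id hclF (fun n hn => absurd hn (Nat.not_lt_zero n))]
      at hsat
  · intro hsat
    refine subK_to_subtype hTcl hTwf hUcl hUwf (fun k => ?_)
    have hsat' : Sat U ((charF T s).subst (fun _ => charF (SType.end_ : SType A) s)) := by
      rwa [Formula.subst_closedUnder_id hclF (fun n hn => absurd hn (Nat.not_lt_zero n))]
    have hsub := subKOfSat T hTwf (fun _ => (SType.end_ : SType A))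
      (fun _ => charF (SType.end_ : SType A) s) (fun _ => k) k
      (fun m => ⟨trivial, trivial⟩)
      (fun m V hVc hVw hs => charF_end_subK V hVc hVw hs k)
      (fun m => Nat.le_succ k)
      (fun m _ => le_rfl)
      U hUcl hUwf hsat'
    exact hsub.transfer hteq.symm (TEq.refl U)

end SessionCF
end FinalAssembly

/-- For every `♠ ∈ {⊕, &}` and all closed session types `T`, `U`:
`T ≤_♠ U` iff `U ⊨ F(T, ♠)`. -/
theorem subtype_iff_sat_charF {A : Type} [Fintype A] [LinearOrder A]
    (s : SessionCF.Pol) (T U : SessionCF.SType A)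
    (hTwf : T.wf) (hTcl : T.closed) (hUwf : U.wf) (hUcl : U.closed) :
    SessionCF.Subtype s T U ↔ SessionCF.Sat U (SessionCF.charF T s) := by
  exact SessionCF.subtype_iff_sat_charF_aux hTwf hTcl hUwf hUcl
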